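/- Let 𝕜 be a field, A, B, C vector spaces over 𝕜, and v ∈ A ⊗ B ⊗ C. Then the minimal subspace U_A(v) can be computed by first contracting to the block A ⊗ B and then contracting within the block: U_A(v) = span{(id_A ⊗ ψ)(w) : w ∈ U_{AB}(v), ψ ∈ B^*}, where (id_A ⊗ ψ) : A ⊗ B → A is the linear map sending x ⊗ y to ψ(y) • x. -/
import Mathlib


open scoped TensorProduct

section
variable (𝕜 : Type*) [Field 𝕜]

/-- The contraction `id_V ⊗ φ : V ⊗ W → V`, sending `x ⊗ y` to `φ(y) • x`. -/
noncomputable def rContract (V W : Type*) [AddCommGroup V] [Module 𝕜 V]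
    [AddCommGroup W] [Module 𝕜 W] (φ : W →ₗ[𝕜] 𝕜) : V ⊗[𝕜] W →ₗ[𝕜] V :=
  (TensorProduct.rid 𝕜 V).toLinearMap ∘ₗ TensorProduct.map LinearMap.id φ

/-- The contraction `ψ ⊗ id_W : V ⊗ W → W`, sending `x ⊗ y` to `ψ(x) • y`. -/
noncomputable def lContract (V W : Type*) [AddCommGroup V] [Module 𝕜 V]
    [AddCommGroup W] [Module 𝕜 W] (ψ : V →ₗ[𝕜] 𝕜) : V ⊗[𝕜] W →ₗ[𝕜] W :=
  (TensorProduct.lid 𝕜 W).toLinearMap ∘ₗ TensorProduct.map ψ LinearMap.id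

/-- The left minimal subspace `U_V(v)` of `v ∈ V ⊗ W`: the span of all contractions
`(id_V ⊗ φ)(v)` with `φ` in the algebraic dual of `W`. -/
noncomputable def leftMin (V W : Type*) [AddCommGroup V] [Module 𝕜 V]
    [AddCommGroup W] [Module 𝕜 W] (v : V ⊗[𝕜] W) : Submodule 𝕜 V :=
  Submodule.span 𝕜 {x | ∃ φ : W →ₗ[𝕜] 𝕜, rContract 𝕜 V W φ v = x}

/-- The right minimal subspace `U_W(v)` of `v ∈ V ⊗ W`: the span of all contractions
`(ψ ⊗ id_W)(v)` with `ψ` in the algebraic dual of `V`. -/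
noncomputable def rightMin (V W : Type*) [AddCommGroup V] [Module 𝕜 V]
    [AddCommGroup W] [Module 𝕜 W] (v : V ⊗[𝕜] W) : Submodule 𝕜 W :=
  Submodule.span 𝕜 {y | ∃ ψ : V →ₗ[𝕜] 𝕜, lContract 𝕜 V W ψ v = y}

end

section
variable (𝕜 A B C : Type*) [Field 𝕜] [AddCommGroup A] [Module 𝕜 A]
  [AddCommGroup B] [Module 𝕜 B] [AddCommGroup C] [Module 𝕜 C]

/-- The minimal subspace `U_{AB}(v) ≤ A ⊗ B` of `v ∈ (A ⊗ B) ⊗ C`. -/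
noncomputable def minAB (v : (A ⊗[𝕜] B) ⊗[𝕜] C) : Submodule 𝕜 (A ⊗[𝕜] B) :=
  leftMin 𝕜 (A ⊗[𝕜] B) C v

/-- The minimal subspace `U_A(v) ≤ A` of `v ∈ (A ⊗ B) ⊗ C`, obtained by contracting
`B ⊗ C` via the associativity isomorphism. -/
noncomputable def minA (v : (A ⊗[𝕜] B) ⊗[𝕜] C) : Submodule 𝕜 A :=
  leftMin 𝕜 A (B ⊗[𝕜] C) (TensorProduct.assoc 𝕜 A B C v)

/-- The minimal subspace `U_B(v) ≤ B` of `v ∈ (A ⊗ B) ⊗ C`, obtained by contracting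
the factors `A` and `C`. -/
noncomputable def minB (v : (A ⊗[𝕜] B) ⊗[𝕜] C) : Submodule 𝕜 B :=
  Submodule.span 𝕜
    {y | ∃ (ψ : A →ₗ[𝕜] 𝕜) (φ : C →ₗ[𝕜] 𝕜),
      lContract 𝕜 A B ψ (rContract 𝕜 (A ⊗[𝕜] B) C φ v) = y}

end
section
variable {𝕜 A B C : Type*} [Field 𝕜] [AddCommGroup A] [Module 𝕜 A]
  [AddCommGroup B] [Module 𝕜 B] [AddCommGroup C] [Module 𝕜 C]

section
variable {𝕜 A B C : Type*} [Field 𝕜] [AddCommGroup A] [Module 𝕜 A]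
  [AddCommGroup B] [Module 𝕜 B] [AddCommGroup C] [Module 𝕜 C]

lemma aux_assoc_contract (χ : B ⊗[𝕜] C →ₗ[𝕜] 𝕜) (c : C) (m : A ⊗[𝕜] B) :
    rContract 𝕜 A (B ⊗[𝕜] C) χ (TensorProduct.assoc 𝕜 A B C (m ⊗ₜ[𝕜] c)) =
    rContract 𝕜 A B (χ ∘ₗ (TensorProduct.mk 𝕜 B C).flip c) m := by
  induction m using TensorProduct.induction_on with
  | zero => simp [rContract]
  | tmul a b => simp [rContract]
  | add x y hx hy =>
      simp only [TensorProduct.add_tmul, map_add, hx, hy]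

lemma aux_double_contract (ψ : B →ₗ[𝕜] 𝕜) (φ : C →ₗ[𝕜] 𝕜) (v : (A ⊗[𝕜] B) ⊗[𝕜] C) :
    rContract 𝕜 A B ψ (rContract 𝕜 (A ⊗[𝕜] B) C φ v) =
    rContract 𝕜 A (B ⊗[𝕜] C) (φ ∘ₗ lContract 𝕜 B C ψ) (TensorProduct.assoc 𝕜 A B C v) := by
  induction v using TensorProduct.induction_on with
  | zero => simp
  | tmul m c =>
      induction m using TensorProduct.induction_on with
      | zero => simp [rContract, lContract]
      | tmul a b => simp [rContract, lContract, smul_smul, mul_comm]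
      | add x y hx hy => simp only [TensorProduct.add_tmul, map_add, hx, hy]
  | add x y hx hy => simp only [map_add, hx, hy]

end

/-- **Hierarchical computation of minimal subspaces.**
For `v ∈ A ⊗ B ⊗ C`, the minimal subspace `U_A(v)` is obtained by first contracting to
the block `A ⊗ B` and then contracting within the block:
`U_A(v) = span {(id_A ⊗ ψ)(w) : w ∈ U_{AB}(v), ψ ∈ B^*}`. -/
theorem minA_eq_span_contractions_of_minAB (v : (A ⊗[𝕜] B) ⊗[𝕜] C) :
    minA 𝕜 A B C v =
      Submodule.span 𝕜
        {x | ∃ w ∈ minAB 𝕜 A B C v, ∃ ψ : B →ₗ[𝕜] 𝕜, rContract 𝕜 A B ψ w = x} := by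
  classical
  apply le_antisymm
  · rw [minA, leftMin, Submodule.span_le]
    rintro x ⟨χ, rfl⟩
    set 𝒞 := Module.Basis.ofVectorSpace 𝕜 C with h𝒞
    obtain ⟨b, hb⟩ := TensorProduct.eq_repr_basis_right 𝒞 v
    have hbi : ∀ i, b i ∈ minAB 𝕜 A B C v := by
      intro i
      by_cases hi : i ∈ b.support
      · apply Submodule.subset_span
        refine ⟨𝒞.coord i, ?_⟩
        rw [← hb, map_finsuppSum, Finsupp.sum, Finset.sum_eq_single i]
        · simp [rContract]
        · intro j hj hji
          have : (𝒞.coord i) (𝒞 j) = 0 := by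
            simp [Module.Basis.coord_apply, Finsupp.single_apply, hji]
          simp [rContract, this]
        · intro h; exact absurd hi h
      · rw [Finsupp.notMem_support_iff.mp hi]; exact zero_mem _
    have key : rContract 𝕜 A (B ⊗[𝕜] C) χ (TensorProduct.assoc 𝕜 A B C v) =
        b.sum fun i m ↦ rContract 𝕜 A B (χ ∘ₗ (TensorProduct.mk 𝕜 B C).flip (𝒞 i)) m := by
      rw [← hb, map_finsuppSum, map_finsuppSum]
      exact Finsupp.sum_congr fun i _ ↦ aux_assoc_contract χ (𝒞 i) (b i)
    rw [key]
    refine Submodule.sum_mem _ fun i _ ↦ Submodule.subset_span ?_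
    exact ⟨b i, hbi i, _, rfl⟩
  · rw [Submodule.span_le]
    rintro x ⟨w, hw, ψ, rfl⟩
    have hm : rContract 𝕜 A B ψ w ∈
        Submodule.map (rContract 𝕜 A B ψ) (minAB 𝕜 A B C v) := ⟨w, hw, rfl⟩
    rw [minAB, leftMin, Submodule.map_span] at hm
    refine Submodule.span_le.mpr ?_ hm
    rintro y ⟨z, ⟨φ, rfl⟩, rfl⟩
    apply Submodule.subset_span
    exact ⟨φ ∘ₗ lContract 𝕜 B C ψ, (aux_double_contract ψ φ v).symm⟩


end
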